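/- arXiv:1509.06554 — 5 statements merged into one kernel-verified Lean document; each statement's English description precedes it below -/
import Mathlib

section
/- A finite simple graph G is a closed graph (i.e., admits a labeling of its vertices making it closed) if and only if G admits a proper interval ordering of its vertices. -/
open SimpleGraph

/-- `σ` is a proper interval ordering of `G`: whenever `σ u < σ v < σ w` and
`{u,w}` is an edge, both `{u,v}` and `{v,w}` are edges. -/
def IsPIO {V : Type*} {n : ℕ} (G : SimpleGraph V) (σ : V ≃ Fin n) : Prop :=
  ∀ u v w : V, σ u < σ v → σ v < σ w → G.Adj u w → G.Adj u v ∧ G.Adj v w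

/-- `G` admits a proper interval ordering. -/
def HasPIO {V : Type*} [Fintype V] (G : SimpleGraph V) : Prop :=
  ∃ σ : V ≃ Fin (Fintype.card V), IsPIO G σ

/-- Chordal: no induced cycle of length ≥ 4. -/
def Chordal {V : Type*} (G : SimpleGraph V) : Prop :=
  ∀ n : ℕ, 4 ≤ n → IsEmpty (cycleGraph n ↪g G)

/-- The claw `K_{1,3}`. -/
def clawGraph : SimpleGraph (Fin 4) :=
  fromEdgeSet {s(0,1), s(0,2), s(0,3)}

/-- The net: a triangle `0,1,2` with pendant vertices `3,4,5`. -/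
def netGraph : SimpleGraph (Fin 6) :=
  fromEdgeSet {s(0,1), s(1,2), s(0,2), s(0,3), s(1,4), s(2,5)}

/-- The tent (3-sun): inner triangle `0,1,2`, outer vertices `3,4,5`. -/
def tentGraph : SimpleGraph (Fin 6) :=
  fromEdgeSet {s(0,1), s(1,2), s(0,2), s(3,0), s(3,1), s(4,1), s(4,2), s(5,2), s(5,0)}

/-- A longest shortest path: a shortest path between two vertices at maximal distance. -/
def IsLongestShortestPath {V : Type*} (G : SimpleGraph V) {u w : V} (p : G.Walk u w) : Prop :=
  p.IsPath ∧ p.length = G.dist u w ∧ ∀ a b : V, G.dist a b ≤ G.dist u w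

/-- Narrow: every vertex lies on, or is adjacent to a vertex of, every longest shortest path. -/
def Narrow {V : Type*} (G : SimpleGraph V) : Prop :=
  ∀ (v u w : V) (p : G.Walk u w), IsLongestShortestPath G p →
    v ∈ p.support ∨ ∃ x ∈ p.support, G.Adj v x

/-- `σ` is a closed labeling of `G`. -/
def IsClosedLabeling {V : Type*} {n : ℕ} (G : SimpleGraph V) (σ : V ≃ Fin n) : Prop :=
  ∀ u v w x : V, G.Adj u v → G.Adj w x → σ u < σ v → σ w < σ x →
    (u = w → v ≠ x → G.Adj v x) ∧ (v = x → u ≠ w → G.Adj u w)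

section aux
variable {V : Type*} {n : ℕ} {G : SimpleGraph V} {σ : V ≃ Fin n}

lemma cliqueUp (hσ : IsClosedLabeling G σ) {u v w : V}
    (h1 : G.Adj u v) (h2 : G.Adj u w) (l1 : σ u < σ v) (l2 : σ u < σ w) (hne : v ≠ w) :
    G.Adj v w :=
  (hσ u v u w h1 h2 l1 l2).1 rfl hne

lemma cliqueDn (hσ : IsClosedLabeling G σ) {u v w : V}
    (h1 : G.Adj v u) (h2 : G.Adj w u) (l1 : σ v < σ u) (l2 : σ w < σ u) (hne : v ≠ w) :
    G.Adj v w :=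
  (hσ v u w u h1 h2 l1 l2).2 rfl hne

lemma step_exists {u v : V} {d : ℕ} (h : G.Reachable u v) (hd : G.dist u v = d + 1) :
    ∃ t, G.Adj u t ∧ G.Reachable t v ∧ G.dist t v = d := by
  obtain ⟨p, hp⟩ := h.exists_walk_length_eq_dist
  rw [hd] at hp
  cases p with
  | nil => simp at hp
  | cons hadj q =>
    refine ⟨_, hadj, q.reachable, le_antisymm ?_ ?_⟩
    · have := SimpleGraph.dist_le q
      simpa [Nat.succ_inj] using this.trans_eq (by simpa using hp)
    · have h1 : G.dist u v ≤ (SimpleGraph.Walk.cons hadj ((q.reachable).exists_walk_length_eq_dist.choose)).length :=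
        SimpleGraph.dist_le _
      have h2 := (q.reachable).exists_walk_length_eq_dist.choose_spec
      simp only [SimpleGraph.Walk.length_cons, h2, hd] at h1
      omega

lemma incdec (hσ : IsClosedLabeling G σ) :
    ∀ d, ∀ u v : V, G.Reachable u v → G.dist u v = d →
      (σ u < σ v → ∃ t, G.Adj u t ∧ G.Reachable t v ∧ σ u < σ t ∧ σ t ≤ σ v ∧ G.dist t v = d - 1) ∧
      (σ v < σ u → ∃ t, G.Adj u t ∧ G.Reachable t v ∧ σ t < σ u ∧ σ v ≤ σ t ∧ G.dist t v = d - 1) := by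
  intro d
  induction d using Nat.strong_induction_on with
  | _ d IH =>
  intro u v hr hd
  have hzero : ∀ (a b : V), G.Reachable a b → a ≠ b → G.dist a b ≠ 0 := by
    intro a b h hne h0
    exact hne ((SimpleGraph.Reachable.dist_eq_zero_iff h).mp h0)
  constructor
  · intro hlt
    have hne : u ≠ v := fun h => absurd (h ▸ hlt) (lt_irrefl _)
    obtain ⟨d', rfl⟩ : ∃ d', d = d' + 1 := by
      rcases d with _ | d'
      · exact absurd hd (hzero u v hr hne)
      · exact ⟨d', rfl⟩
    obtain ⟨t, hut, htv, hdt⟩ := step_exists hr hd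
    rcases lt_trichotomy (σ t) (σ u) with hc | hc | hc
    · -- t below u : contradiction
      exfalso
      have htnev : t ≠ v := fun h => absurd (h ▸ (hc.trans hlt)) (lt_irrefl _)
      have hd1 : G.dist t v ≠ 0 := hzero t v htv htnev
      obtain ⟨s, hts, hsv, hts1, hts2, hds⟩ :=
        ((IH d' (Nat.lt_succ_self _) t v htv hdt).1 (hc.trans hlt))
      have hd' : d' ≠ 0 := by rw [hdt] at hd1; exact hd1
      rcases eq_or_ne s u with rfl | hsu
      · rw [hd] at hds; omega
      · have hus : G.Adj u s := cliqueUp hσ hut.symm hts hc hts1 hsu.symm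
        obtain ⟨q, hq⟩ := hsv.exists_walk_length_eq_dist
        have := SimpleGraph.dist_le (SimpleGraph.Walk.cons hus q)
        rw [SimpleGraph.Walk.length_cons, hq, hds, hd] at this
        omega
    · exact absurd (σ.injective hc) (G.ne_of_adj hut.symm)
    · rcases le_or_gt (σ t) (σ v) with hc2 | hc2
      · exact ⟨t, hut, htv, hc, hc2, hdt⟩
      · exfalso
        have htnev : t ≠ v := fun h => absurd (h ▸ hc2) (lt_irrefl _)
        have hd1 : G.dist t v ≠ 0 := hzero t v htv htnev
        obtain ⟨s, hts, hsv, hts1, hts2, hds⟩ :=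
          ((IH d' (Nat.lt_succ_self _) t v htv hdt).2 hc2)
        have hd' : d' ≠ 0 := by rw [hdt] at hd1; exact hd1
        rcases eq_or_ne s u with rfl | hsu
        · exact absurd (hts2.trans_lt hlt) (lt_irrefl _)
        · have hus : G.Adj u s := cliqueDn hσ hut hts.symm hc hts1 hsu.symm
          obtain ⟨q, hq⟩ := hsv.exists_walk_length_eq_dist
          have := SimpleGraph.dist_le (SimpleGraph.Walk.cons hus q)
          rw [SimpleGraph.Walk.length_cons, hq, hds, hd] at this
          omega
  · intro hlt
    have hne : u ≠ v := fun h => by subst h; exact lt_irrefl _ hlt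
    obtain ⟨d', rfl⟩ : ∃ d', d = d' + 1 := by
      rcases d with _ | d'
      · exact absurd hd (hzero u v hr hne)
      · exact ⟨d', rfl⟩
    obtain ⟨t, hut, htv, hdt⟩ := step_exists hr hd
    rcases lt_trichotomy (σ u) (σ t) with hc | hc | hc
    · -- t above u : contradiction
      exfalso
      have htnev : t ≠ v := fun h => absurd (h ▸ (hlt.trans hc)) (lt_irrefl _)
      have hd1 : G.dist t v ≠ 0 := hzero t v htv htnev
      obtain ⟨s, hts, hsv, hts1, hts2, hds⟩ :=
        ((IH d' (Nat.lt_succ_self _) t v htv hdt).2 (hlt.trans hc))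
      have hd' : d' ≠ 0 := by rw [hdt] at hd1; exact hd1
      rcases eq_or_ne s u with rfl | hsu
      · rw [hd] at hds; omega
      · have hus : G.Adj u s := cliqueDn hσ hut hts.symm hc hts1 hsu.symm
        obtain ⟨q, hq⟩ := hsv.exists_walk_length_eq_dist
        have := SimpleGraph.dist_le (SimpleGraph.Walk.cons hus q)
        rw [SimpleGraph.Walk.length_cons, hq, hds, hd] at this
        omega
    · exact absurd (σ.injective hc) (G.ne_of_adj hut)
    · rcases le_or_gt (σ v) (σ t) with hc2 | hc2
      · exact ⟨t, hut, htv, hc, hc2, hdt⟩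
      · exfalso
        have htnev : t ≠ v := fun h => absurd (h ▸ hc2) (lt_irrefl _)
        have hd1 : G.dist t v ≠ 0 := hzero t v htv htnev
        obtain ⟨s, hts, hsv, hts1, hts2, hds⟩ :=
          ((IH d' (Nat.lt_succ_self _) t v htv hdt).1 hc2)
        have hd' : d' ≠ 0 := by rw [hdt] at hd1; exact hd1
        rcases eq_or_ne s u with rfl | hsu
        · exact absurd (hlt.trans_le hts2) (lt_irrefl _)
        · have hus : G.Adj u s := cliqueUp hσ hut.symm hts hc hts1 hsu.symm
          obtain ⟨q, hq⟩ := hsv.exists_walk_length_eq_dist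
          have := SimpleGraph.dist_le (SimpleGraph.Walk.cons hus q)
          rw [SimpleGraph.Walk.length_cons, hq, hds, hd] at this
          omega

lemma pio_within (hσ : IsClosedLabeling G σ) :
    ∀ d (u v w : V), G.Reachable u v → G.dist u v = d → σ u < σ v → σ v < σ w → G.Adj u w →
      G.Adj u v ∧ G.Adj v w := by
  intro d
  induction d using Nat.strong_induction_on with
  | _ d IH =>
  intro u v w hr hd h1 h2 huw
  have hne : u ≠ v := fun h => by subst h; exact lt_irrefl _ h1
  obtain ⟨d', rfl⟩ : ∃ d', d = d' + 1 := by
    rcases d with _ | d'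
    · exact absurd hd (fun h0 => hne ((SimpleGraph.Reachable.dist_eq_zero_iff hr).mp h0))
    · exact ⟨d', rfl⟩
  obtain ⟨t, hut, htv, hc1, hc2, hdt⟩ := (incdec hσ (d' + 1) u v hr hd).1 h1
  rcases eq_or_ne t v with heq | htv'
  · have huv : G.Adj u v := heq ▸ hut
    have hvw : v ≠ w := fun h => by subst h; exact lt_irrefl _ h2
    exact ⟨huv, cliqueUp hσ huv huw h1 (h1.trans h2) hvw⟩
  · have hc2' : σ t < σ v := lt_of_le_of_ne hc2 (fun h => htv' (σ.injective h))
    have hd' : d' ≠ 0 := fun h0 => by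
      rw [h0] at hdt
      exact htv' ((SimpleGraph.Reachable.dist_eq_zero_iff htv).mp hdt)
    have htw : G.Adj t w := cliqueUp hσ hut huw hc1 (h1.trans h2)
      (fun h => by subst h; exact lt_irrefl _ (hc2'.trans h2))
    have hdt' : G.dist t v = (d' + 1) - 1 := hdt
    obtain ⟨h3, h4⟩ := IH d' (Nat.lt_succ_self _) t v w htv hdt hc2' h2 htw
    exact ⟨cliqueDn hσ huw h4 (h1.trans h2) h2 hne, h4⟩

noncomputable def rmin [Fintype V] (G : SimpleGraph V) (σ : V ≃ Fin n) (x : V) : Fin n :=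
  ((@Finset.filter _ (fun y => G.Reachable x y) (Classical.decPred _) Finset.univ).image σ).min'
    ⟨σ x, Finset.mem_image_of_mem σ (by simp [SimpleGraph.Reachable.refl])⟩

lemma rmin_eq_of_reachable [Fintype V] (h : G.Reachable x y) :
    rmin G σ x = rmin G σ y := by
  unfold rmin
  congr 2
  ext z
  simp only [Finset.mem_filter, Finset.mem_univ, true_and]
  exact ⟨fun hz => h.symm.trans hz, fun hz => h.trans hz⟩

lemma reachable_of_rmin_eq [Fintype V] (h : rmin G σ x = rmin G σ y) :
    G.Reachable x y := by
  have hx := Finset.min'_mem _ (⟨σ x, Finset.mem_image_of_mem σ (by simp [SimpleGraph.Reachable.refl])⟩ :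
    ((@Finset.filter _ (fun z => G.Reachable x z) (Classical.decPred _) Finset.univ).image σ).Nonempty)
  have hy := Finset.min'_mem _ (⟨σ y, Finset.mem_image_of_mem σ (by simp [SimpleGraph.Reachable.refl])⟩ :
    ((@Finset.filter _ (fun z => G.Reachable y z) (Classical.decPred _) Finset.univ).image σ).Nonempty)
  rw [show ((@Finset.filter _ (fun z => G.Reachable x z) (Classical.decPred _) Finset.univ).image σ).min'
      ⟨σ x, Finset.mem_image_of_mem σ (by simp [SimpleGraph.Reachable.refl])⟩ = rmin G σ x from rfl] at hx
  rw [show ((@Finset.filter _ (fun z => G.Reachable y z) (Classical.decPred _) Finset.univ).image σ).min'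
      ⟨σ y, Finset.mem_image_of_mem σ (by simp [SimpleGraph.Reachable.refl])⟩ = rmin G σ y from rfl] at hy
  rw [h] at hx
  simp only [Finset.mem_image, Finset.mem_filter, Finset.mem_univ, true_and] at hx hy
  obtain ⟨a, hxa, ha⟩ := hx
  obtain ⟨b, hyb, hb⟩ := hy
  have : a = b := σ.injective (ha.trans hb.symm)
  exact hxa.trans (this ▸ hyb.symm)

end aux

theorem closed_iff_hasPIO {V : Type*} [Fintype V] (G : SimpleGraph V) :
    (∃ σ : V ≃ Fin (Fintype.card V), IsClosedLabeling G σ) ↔ HasPIO G := by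
  constructor
  · rintro ⟨σ, hσ⟩
    have hinj : Function.Injective
        (fun x : V => (toLex (rmin G σ x, σ x) : Fin (Fintype.card V) ×ₗ Fin (Fintype.card V))) := by
      intro a b hab
      exact σ.injective (congrArg (fun p => (ofLex p).2) hab)
    letI : LinearOrder V := LinearOrder.lift' _ hinj
    have hlt : ∀ a b : V, a < b ↔
        (toLex (rmin G σ a, σ a) : Fin (Fintype.card V) ×ₗ Fin (Fintype.card V)) <
          toLex (rmin G σ b, σ b) := fun a b => Iff.rfl
    let τ : V ≃o Fin (Fintype.card V) := (Fintype.orderIsoFinOfCardEq V rfl).symm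
    refine ⟨τ.toEquiv, ?_⟩
    intro u v w h1 h2 huw
    have k1 := (hlt u v).mp (τ.lt_iff_lt.mp h1)
    have k2 := (hlt v w).mp (τ.lt_iff_lt.mp h2)
    rw [Prod.Lex.lt_iff] at k1 k2
    have hruw : rmin G σ u = rmin G σ w := rmin_eq_of_reachable huw.reachable
    have hk1 : rmin G σ u = rmin G σ v ∧ σ u < σ v := by
      rcases k1 with h | h
      · exfalso
        rcases k2 with h' | h'
        · exact absurd (hruw ▸ (h.trans h')) (lt_irrefl _)
        · exact absurd (hruw ▸ (h'.1 ▸ h)) (lt_irrefl _)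
      · exact h
    have hk2 : σ v < σ w := by
      rcases k2 with h' | h'
      · exfalso; rw [← hk1.1, hruw] at h'; exact lt_irrefl _ h'
      · exact h'.2
    have hr : G.Reachable u v := reachable_of_rmin_eq hk1.1
    exact pio_within hσ (G.dist u v) u v w hr rfl hk1.2 hk2 huw
  · rintro ⟨σ, hσ⟩
    refine ⟨σ, ?_⟩
    intro u v w x h1 h2 l1 l2
    constructor
    · rintro rfl hne
      have hne' : σ v ≠ σ x := fun h => hne (σ.injective h)
      rcases hne'.lt_or_gt with h | h
      · exact (hσ u v x l1 h h2).2
      · exact ((hσ u x v l2 h h1).2).symm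
    · rintro rfl hne
      have hne' : σ u ≠ σ w := fun h => hne (σ.injective h)
      rcases hne'.lt_or_gt with h | h
      · exact (hσ u w v h l2 h1).1
      · exact ((hσ w u v h l1 h2).1).symm
end

section
/- The net graph is not narrow: in the net, there is a vertex at distance 2 from a longest shortest path. -/
open SimpleGraph

/-
The triangle `a b c` (vertices `0 1 2`) is a clique dominating the net, so any two vertices are
joined through it by a walk of length at most 3. The pendant vertices `x = 3` and `y = 4` have no
common neighbour, so `diam = 3` and `x - a - b - y` is a longest shortest path. The third pendant
vertex `z = 5` is adjacent only to `c`, which is off that path, and `z - c - a` puts it at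
distance exactly 2 from the path.
-/

namespace SimpleGraph

variable {V : Type*} {G : SimpleGraph V}

theorem edist_le_three_of_isClique_of_dominating {K : Set V} (hK : G.IsClique K)
    (hdom : ∀ v, ∃ k ∈ K, G.Adj v k ∨ v = k) (u v : V) : G.edist u v ≤ 3 := by
  have near (v : V) : ∃ k ∈ K, G.edist v k ≤ 1 := by
    obtain ⟨k, hk, hvk⟩ := hdom v
    exact ⟨k, hk, edist_le_one_iff_adj_or_eq.mpr hvk⟩
  obtain ⟨k, hk, hvk⟩ := near u
  obtain ⟨l, hl, hwl⟩ := near v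
  have hkl : G.edist k l ≤ 1 :=
    edist_le_one_iff_adj_or_eq.mpr ((em (k = l)).symm.imp_left (hK hk hl))
  calc G.edist u v ≤ G.edist u k + (G.edist k l + G.edist l v) :=
        G.edist_triangle.trans (add_le_add_right G.edist_triangle _)
    _ ≤ 1 + (1 + 1) := by grw [hvk, hkl, edist_comm, hwl]
    _ = 3 := rfl

theorem connected_of_isClique_of_dominating [Nonempty V] {K : Set V} (hK : G.IsClique K)
    (hdom : ∀ v, ∃ k ∈ K, G.Adj v k ∨ v = k) : G.Connected :=
  .mk fun u v ↦ reachable_of_edist_ne_top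
    (ne_top_of_le_ne_top (by decide) (edist_le_three_of_isClique_of_dominating hK hdom u v))

theorem dist_le_three_of_isClique_of_dominating {K : Set V} (hK : G.IsClique K)
    (hdom : ∀ v, ∃ k ∈ K, G.Adj v k ∨ v = k) (u v : V) : G.dist u v ≤ 3 :=
  ENat.toNat_le_of_le_natCast (edist_le_three_of_isClique_of_dominating hK hdom u v)

theorem dist_eq_of_edist_eq {u v : V} {n : ℕ} (h : G.edist u v = n) : G.dist u v = n :=
  (congrArg ENat.toNat h).trans (ENat.toNat_natCast n)

theorem isLongestShortestPath_of_length_eq_dist {u w : V} {p : G.Walk u w}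
    (hp : p.length = G.dist u w) (hmax : ∀ a b, G.dist a b ≤ G.dist u w) :
    IsLongestShortestPath G p :=
  ⟨p.isPath_of_length_eq_dist hp, hp, hmax⟩

end SimpleGraph

open SimpleGraph

instance : DecidableRel netGraph.Adj := fun u v ↦
  decidable_of_iff ((s(u, v) = s(0, 1) ∨ s(u, v) = s(1, 2) ∨ s(u, v) = s(0, 2) ∨
      s(u, v) = s(0, 3) ∨ s(u, v) = s(1, 4) ∨ s(u, v) = s(2, 5)) ∧ u ≠ v) (by
    simp [netGraph])

theorem netGraph_isClique_triangle : netGraph.IsClique ({0, 1, 2} : Finset (Fin 6)) := by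
  decide

theorem netGraph_triangle_dominating :
    ∀ v, ∃ k ∈ (({0, 1, 2} : Finset (Fin 6)) : Set (Fin 6)), netGraph.Adj v k ∨ v = k := by
  decide

theorem netGraph_connected : netGraph.Connected :=
  connected_of_isClique_of_dominating netGraph_isClique_triangle netGraph_triangle_dominating

theorem netGraph_dist_le_three (u v : Fin 6) : netGraph.dist u v ≤ 3 :=
  dist_le_three_of_isClique_of_dominating netGraph_isClique_triangle
    netGraph_triangle_dominating u v

theorem netGraph_two_le_dist {u v : Fin 6} (hne : u ≠ v) (hnadj : ¬netGraph.Adj u v) :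
    2 ≤ netGraph.dist u v :=
  (netGraph_connected u v).one_lt_dist_of_ne_of_not_adj hne hnadj

theorem netGraph_edist_three_four : netGraph.edist 3 4 = 3 := by
  refine le_antisymm (edist_le_three_of_isClique_of_dominating netGraph_isClique_triangle
    netGraph_triangle_dominating 3 4) (Order.add_one_le_of_lt (two_lt_edist_iff.mpr ?_))
  refine ⟨by decide, by decide, Set.eq_empty_of_forall_notMem fun w hw ↦ ?_⟩
  rw [mem_commonNeighbors] at hw
  revert w
  decide

theorem netGraph_dist_three_four : netGraph.dist 3 4 = 3 :=
  dist_eq_of_edist_eq netGraph_edist_three_four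

theorem netGraph_dist_five_zero : netGraph.dist 5 0 = 2 :=
  dist_eq_of_edist_eq <| edist_eq_two_iff.mpr
    ⟨by decide, by decide, ⟨2, netGraph.mem_commonNeighbors.mpr (by decide)⟩⟩

def netDiametralPath : netGraph.Walk 3 4 :=
  .cons (by decide : netGraph.Adj 3 0) (.cons (by decide : netGraph.Adj 0 1)
    (.cons (by decide : netGraph.Adj 1 4) .nil))

theorem isLongestShortestPath_netDiametralPath :
    IsLongestShortestPath netGraph netDiametralPath := by
  refine isLongestShortestPath_of_length_eq_dist ?_ fun a b ↦ ?_ <;>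
    rw [netGraph_dist_three_four]
  · rfl
  · exact netGraph_dist_le_three a b

theorem netGraph_not_narrow :
    ∃ (v u w : Fin 6) (p : netGraph.Walk u w), IsLongestShortestPath netGraph p ∧
      (∀ x ∈ p.support, 2 ≤ netGraph.dist v x) ∧ (∃ x ∈ p.support, netGraph.dist v x = 2) := by
  have support_eq : netDiametralPath.support = [3, 0, 1, 4] := rfl
  refine ⟨5, 3, 4, netDiametralPath, isLongestShortestPath_netDiametralPath, ?_,
    ⟨0, by simp [support_eq], netGraph_dist_five_zero⟩⟩
  simp only [support_eq, List.mem_cons, List.not_mem_nil, or_false]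
  rintro x (rfl | rfl | rfl | rfl) <;> exact netGraph_two_le_dist (by decide) (by decide)
end

section
/- If a finite simple graph G admits a proper interval ordering, then G has a proper interval representation: one can assign to each vertex v a closed real interval I_v such that no interval properly contains another and two distinct vertices u,v are adjacent if and only if I_u ∩ I_v ≠ ∅. -/
open SimpleGraph

open Classical in
noncomputable def pioS {V : Type*} [Fintype V] {n : ℕ} (G : SimpleGraph V) (σ : V ≃ Fin n)
    (v : V) : Finset ℕ :=
  insert (σ v : ℕ)
    ((Finset.univ.filter (fun w => G.Adj v w ∧ σ v < σ w)).image (fun w => ((σ w : ℕ))))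

noncomputable def pioF {V : Type*} [Fintype V] {n : ℕ} (G : SimpleGraph V) (σ : V ≃ Fin n)
    (v : V) : ℕ :=
  (pioS G σ v).max' ⟨(σ v : ℕ), Finset.mem_insert_self _ _⟩

lemma pioF_self_le {V : Type*} [Fintype V] {n : ℕ} (G : SimpleGraph V) (σ : V ≃ Fin n) (v : V) :
    (σ v : ℕ) ≤ pioF G σ v :=
  Finset.le_max' _ _ (Finset.mem_insert_self _ _)

lemma pioF_spec {V : Type*} [Fintype V] {n : ℕ} (G : SimpleGraph V) (σ : V ≃ Fin n) (v : V) :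
    pioF G σ v = (σ v : ℕ) ∨ ∃ w, G.Adj v w ∧ σ v < σ w ∧ (σ w : ℕ) = pioF G σ v := by
  classical
  have := (pioS G σ v).max'_mem ⟨(σ v : ℕ), Finset.mem_insert_self _ _⟩
  unfold pioS at this
  simp only [Finset.mem_insert, Finset.mem_image, Finset.mem_filter, Finset.mem_univ,
    true_and] at this
  rcases this with h | ⟨w, ⟨hw1, hw2⟩, hw3⟩
  · exact Or.inl h
  · exact Or.inr ⟨w, hw1, hw2, hw3⟩

lemma pioF_adj_le {V : Type*} [Fintype V] {n : ℕ} (G : SimpleGraph V) (σ : V ≃ Fin n)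
    {v w : V} (h1 : G.Adj v w) (h2 : σ v < σ w) : (σ w : ℕ) ≤ pioF G σ v := by
  classical
  apply Finset.le_max'
  unfold pioS
  simp only [Finset.mem_insert, Finset.mem_image, Finset.mem_filter, Finset.mem_univ, true_and]
  exact Or.inr ⟨w, ⟨h1, h2⟩, rfl⟩

lemma pioF_adj_iff {V : Type*} [Fintype V] {n : ℕ} {G : SimpleGraph V} {σ : V ≃ Fin n}
    (hσ : IsPIO G σ) {u v : V} (huv : σ u < σ v) :
    G.Adj u v ↔ (σ v : ℕ) ≤ pioF G σ u := by
  constructor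
  · intro h; exact pioF_adj_le G σ h huv
  · intro h
    rcases pioF_spec G σ u with hs | ⟨w, hw1, hw2, hw3⟩
    · exfalso
      rw [hs] at h
      exact absurd huv (not_lt.mpr (Fin.le_def.mpr h))
    · rw [← hw3] at h
      rcases lt_or_eq_of_le h with hlt | heq
      · have : σ v < σ w := by exact_mod_cast hlt
        exact (hσ u v w huv this hw1).1
      · have : σ v = σ w := by exact Fin.ext heq
        rw [σ.injective this]; exact hw1

lemma pioF_mono {V : Type*} [Fintype V] {n : ℕ} {G : SimpleGraph V} {σ : V ≃ Fin n}
    (hσ : IsPIO G σ) {u v : V} (huv : σ u < σ v) : pioF G σ u ≤ pioF G σ v := by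
  rcases pioF_spec G σ u with hs | ⟨w, hw1, hw2, hw3⟩
  · calc pioF G σ u = (σ u : ℕ) := hs
      _ ≤ (σ v : ℕ) := le_of_lt huv
      _ ≤ pioF G σ v := pioF_self_le G σ v
  · rcases lt_trichotomy (σ v) (σ w) with h | h | h
    · have hadj : G.Adj v w := (hσ u v w huv h hw1).2
      rw [← hw3]; exact pioF_adj_le G σ hadj h
    · rw [← hw3, ← σ.injective h]; exact pioF_self_le G σ v
    · rw [← hw3]
      calc (σ w : ℕ) ≤ (σ v : ℕ) := le_of_lt h
        _ ≤ pioF G σ v := pioF_self_le G σ v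

theorem hasPIO_properIntervalRep {V : Type*} [Fintype V] (G : SimpleGraph V) (h : HasPIO G) :
    ∃ l r : V → ℝ, (∀ v, l v ≤ r v) ∧
      (∀ u v : V, ¬ Set.Icc (l u) (r u) ⊂ Set.Icc (l v) (r v)) ∧
      (∀ u v : V, u ≠ v → (G.Adj u v ↔ (Set.Icc (l u) (r u) ∩ Set.Icc (l v) (r v)).Nonempty)) := by
  obtain ⟨σ, hσ⟩ := h
  have hnpos : ∀ _ : V, (0 : ℝ) < (Fintype.card V : ℝ) := fun v => by
    have h1 := (σ v).isLt
    have h2 : 0 < Fintype.card V := Nat.lt_of_le_of_lt (Nat.zero_le _) h1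
    exact_mod_cast h2
  have heps0 : ∀ v : V, (0 : ℝ) ≤ ((σ v : ℕ) : ℝ) / (Fintype.card V : ℝ) := fun v => by
    positivity
  have heps1 : ∀ v : V, ((σ v : ℕ) : ℝ) / (Fintype.card V : ℝ) < 1 := fun v => by
    rw [div_lt_one (hnpos v)]
    exact_mod_cast (σ v).isLt
  have hlr : ∀ v : V, ((σ v : ℕ) : ℝ) ≤
      ((pioF G σ v : ℕ) : ℝ) + ((σ v : ℕ) : ℝ) / (Fintype.card V : ℝ) := by
    intro v
    have h1 : ((σ v : ℕ) : ℝ) ≤ ((pioF G σ v : ℕ) : ℝ) := Nat.cast_le.mpr (pioF_self_le G σ v)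
    have := heps0 v
    linarith
  have hlmono : ∀ {u v : V}, σ u < σ v → ((σ u : ℕ) : ℝ) < ((σ v : ℕ) : ℝ) := by
    intro u v huv
    exact_mod_cast huv
  have hrmono : ∀ {u v : V}, σ u < σ v →
      ((pioF G σ u : ℕ) : ℝ) + ((σ u : ℕ) : ℝ) / (Fintype.card V : ℝ) <
      ((pioF G σ v : ℕ) : ℝ) + ((σ v : ℕ) : ℝ) / (Fintype.card V : ℝ) := by
    intro u v huv
    have h1 : ((pioF G σ u : ℕ) : ℝ) ≤ ((pioF G σ v : ℕ) : ℝ) :=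
      Nat.cast_le.mpr (pioF_mono hσ huv)
    have h2 : ((σ u : ℕ) : ℝ) / (Fintype.card V : ℝ) < ((σ v : ℕ) : ℝ) / (Fintype.card V : ℝ) := by
      have := hnpos u
      gcongr
      exact_mod_cast huv
    linarith
  refine ⟨fun v => ((σ v : ℕ) : ℝ),
    fun v => ((pioF G σ v : ℕ) : ℝ) + ((σ v : ℕ) : ℝ) / (Fintype.card V : ℝ), hlr, ?_, ?_⟩
  · intro u v hsub
    rcases lt_trichotomy (σ u) (σ v) with hlt | heq | hgt
    · have := (Set.Icc_subset_Icc_iff (hlr u)).1 hsub.subset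
      exact absurd this.1 (not_le.mpr (hlmono hlt))
    · rw [σ.injective heq] at hsub
      exact lt_irrefl _ hsub
    · have := (Set.Icc_subset_Icc_iff (hlr u)).1 hsub.subset
      exact absurd this.2 (not_le.mpr (hrmono hgt))
  · have key : ∀ u v : V, σ u < σ v → (G.Adj u v ↔
        (Set.Icc ((σ u : ℕ) : ℝ) (((pioF G σ u : ℕ) : ℝ) + ((σ u : ℕ) : ℝ) / (Fintype.card V : ℝ)) ∩
         Set.Icc ((σ v : ℕ) : ℝ) (((pioF G σ v : ℕ) : ℝ) + ((σ v : ℕ) : ℝ) / (Fintype.card V : ℝ))).Nonempty) := by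
      intro u v huv
      rw [Set.Icc_inter_Icc, Set.nonempty_Icc,
        max_eq_right (hlmono huv).le, min_eq_left (hrmono huv).le]
      rw [pioF_adj_iff hσ huv]
      constructor
      · intro hle
        have h1 : ((σ v : ℕ) : ℝ) ≤ ((pioF G σ u : ℕ) : ℝ) := Nat.cast_le.mpr hle
        have := heps0 u
        linarith
      · intro hle
        have := heps1 u
        have h2 : ((σ v : ℕ) : ℝ) < ((pioF G σ u : ℕ) : ℝ) + 1 := by linarith
        have h3 : (σ v : ℕ) < pioF G σ u + 1 := by exact_mod_cast h2
        omega
    intro u v huv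
    rcases lt_trichotomy (σ u) (σ v) with hlt | heq | hgt
    · exact key u v hlt
    · exact absurd (σ.injective heq) huv
    · rw [G.adj_comm, Set.inter_comm]
      exact key v u hgt
end

section
/- If a finite simple graph G has a proper interval representation (intervals, none properly containing another, with adjacency given by intersection), then G admits a proper interval ordering. -/
open SimpleGraph

/-!
Order the vertices by left endpoint. Since no interval properly contains another, the right
endpoints then come in the same order. So if `u ≤ v ≤ w` in this order and `I_u` meets `I_w`,
i.e. `ℓ_w ≤ r_u`, then `ℓ_u ≤ ℓ_v ≤ ℓ_w ≤ r_u ≤ r_v ≤ r_w`: the point `ℓ_w` lies in all three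
intervals.
-/
open Set

theorem Set.Icc_inter_Icc_nonempty_iff {α : Type*} [LinearOrder α] {a b c d : α}
    (hab : a ≤ b) (hcd : c ≤ d) : (Icc a b ∩ Icc c d).Nonempty ↔ c ≤ b ∧ a ≤ d := by
  rw [Icc_inter_Icc, nonempty_Icc, sup_le_iff, le_inf_iff, le_inf_iff]
  tauto

theorem right_le_right_of_not_Icc_ssubset {ι α : Type*} [LinearOrder α] {l r : ι → α}
    (hproper : ∀ i j, ¬ Icc (l i) (r i) ⊂ Icc (l j) (r j)) {i j : ι} (hi : l i ≤ r i)
    (h : l i ≤ l j) : r i ≤ r j :=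
  le_of_not_gt fun hr => hproper j i (Icc_ssubset_Icc_right hi h hr)

theorem Fintype.exists_equivFin_le_of_lt {V α : Type*} [Fintype V] [LinearOrder α] (f : V → α) :
    ∃ σ : V ≃ Fin (Fintype.card V), ∀ u v, σ u < σ v → f u ≤ f v := by
  let e := Fintype.equivFin V
  refine ⟨e.trans (Tuple.sort (f ∘ e.symm)).symm, fun u v huv => ?_⟩
  simpa using Tuple.monotone_sort (f ∘ e.symm) huv.le

theorem properIntervalRep_hasPIO {V : Type*} [Fintype V] (G : SimpleGraph V)
    (l r : V → ℝ) (hlr : ∀ v, l v ≤ r v)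
    (hproper : ∀ u v : V, ¬ Set.Icc (l u) (r u) ⊂ Set.Icc (l v) (r v))
    (hadj : ∀ u v : V, u ≠ v →
      (G.Adj u v ↔ (Set.Icc (l u) (r u) ∩ Set.Icc (l v) (r v)).Nonempty)) :
    HasPIO G := by
  have adj_iff : ∀ u v, u ≠ v → (G.Adj u v ↔ l v ≤ r u ∧ l u ≤ r v) := fun u v huv =>
    (hadj u v huv).trans (Icc_inter_Icc_nonempty_iff (hlr u) (hlr v))
  obtain ⟨σ, hσ⟩ := Fintype.exists_equivFin_le_of_lt l
  refine ⟨σ, fun u v w huv hvw huw => ?_⟩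
  have hlu := hσ u v huv
  have hlv := hσ v w hvw
  have hru := right_le_right_of_not_Icc_ssubset hproper (hlr u) hlu
  have hrv := right_le_right_of_not_Icc_ssubset hproper (hlr v) hlv
  obtain ⟨hwu, -⟩ := (adj_iff u w (G.ne_of_adj huw)).mp huw
  rw [adj_iff u v (ne_of_apply_ne σ huv.ne), adj_iff v w (ne_of_apply_ne σ hvw.ne)]
  exact ⟨⟨by linarith, by linarith⟩, by linarith, by linarith⟩
end

section
/- If G is a connected finite simple graph that admits a proper interval ordering σ, then the sequence of vertices in σ-increasing order forms a Hamiltonian path in G (consecutive vertices in the ordering are adjacent). -/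
open SimpleGraph

theorem PIO_hamiltonian_path {V : Type*} [Fintype V] (G : SimpleGraph V) (hc : G.Connected)
    (σ : V ≃ Fin (Fintype.card V)) (hσ : IsPIO G σ) :
    ∀ i j : Fin (Fintype.card V), (i : ℕ) + 1 = (j : ℕ) → G.Adj (σ.symm i) (σ.symm j) := by
  intro i j hij
  -- find a crossing edge along a walk from σ.symm i to σ.symm j
  have hcross : ∃ a b : V, G.Adj a b ∧ (σ a : ℕ) ≤ i ∧ (j : ℕ) ≤ σ b := by
    obtain ⟨p⟩ := hc (σ.symm i) (σ.symm j)
    have key : ∀ {a b : V} (q : G.Walk a b), (σ a : ℕ) ≤ i → (j : ℕ) ≤ σ b →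
        ∃ x y : V, G.Adj x y ∧ (σ x : ℕ) ≤ i ∧ (j : ℕ) ≤ σ y := by
      intro a b q
      induction q with
      | nil =>
        intro h1 h2
        omega
      | cons h q ih =>
        rename_i u v w
        intro h1 h2
        by_cases hv : (σ v : ℕ) ≤ i
        · exact ih hv h2
        · exact ⟨u, v, h, h1, by omega⟩
    have h1 : (σ (σ.symm i) : ℕ) ≤ i := by simp
    have h2 : (j : ℕ) ≤ σ (σ.symm j) := by simp
    exact key p h1 h2
  obtain ⟨a, b, hab, ha, hb⟩ := hcross
  -- step 1: get edge from σ.symm i to b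
  have step1 : G.Adj (σ.symm i) b := by
    rcases eq_or_lt_of_le ha with h | h
    · have : a = σ.symm i := by
        apply σ.injective; simp only [Equiv.apply_symm_apply, Fin.ext_iff]; omega
      rwa [← this]
    · have h1 : σ a < σ (σ.symm i) := by simp only [Fin.lt_def, Equiv.apply_symm_apply]; omega
      have h2 : σ (σ.symm i) < σ b := by simp only [Fin.lt_def, Equiv.apply_symm_apply]; omega
      exact (hσ a (σ.symm i) b h1 h2 hab).2
  -- step 2: get edge from σ.symm i to σ.symm j
  rcases eq_or_lt_of_le hb with h | h
  · have : b = σ.symm j := by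
      apply σ.injective; simp only [Equiv.apply_symm_apply, Fin.ext_iff]; omega
    rwa [this] at step1
  · have h1 : σ (σ.symm i) < σ (σ.symm j) := by simp only [Fin.lt_def, Equiv.apply_symm_apply]; omega
    have h2 : σ (σ.symm j) < σ b := by simp only [Fin.lt_def, Equiv.apply_symm_apply]; omega
    exact (hσ (σ.symm i) (σ.symm j) b h1 h2 step1).1
end
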